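/- Let $T, L_1, \dots, L_N$ be unit-variance random variables such that $\mathrm{Corr}(T, L_i) = r$ for all $i$ and $\mathrm{Corr}(L_i, L_j) = c$ for all $i \neq j$ (a homogeneous ensemble). Then $r^2 \leq \frac{(N-1)c + 1}{N}$. -/

import Mathlib

/-!
Write `S = ∑ i, L i`. With unit variances correlations are covariances, so bilinearity of the
covariance gives `cov(T, S) = N r` and `Var S = N ((N - 1) c + 1)`, and the Cauchy–Schwarz
inequality `cov(T, S)² ≤ Var T · Var S` becomes `(N r)² ≤ N ((N - 1) c + 1)`.
-/

open MeasureTheory ProbabilityTheory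

/-- Covariance of two real random variables. -/
noncomputable def cov {Ω : Type*} [MeasurableSpace Ω] (μ : Measure Ω) (f g : Ω → ℝ) : ℝ :=
  ∫ ω, (f ω - ∫ x, f x ∂μ) * (g ω - ∫ x, g x ∂μ) ∂μ

/-- Pearson correlation of two real random variables. -/
noncomputable def corr {Ω : Type*} [MeasurableSpace Ω] (μ : Measure Ω) (f g : Ω → ℝ) : ℝ :=
  cov μ f g / Real.sqrt (variance f μ * variance g μ)

lemma Fintype.sum_sum_eq_of_diag_of_offDiag {ι R : Type*} [Fintype ι] [CommRing R]
    (a : ι → ι → R) (d c : R) (hd : ∀ i, a i i = d) (hc : ∀ i j, i ≠ j → a i j = c) :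
    ∑ i, ∑ j, a i j = Fintype.card ι * ((Fintype.card ι - 1) * c + d) := by
  classical
  have hrow : ∀ i, ∑ j, a i j = ∑ j, (c + if i = j then d - c else 0) := fun i =>
    Finset.sum_congr rfl fun j _ => by
      by_cases h : i = j
      · subst h; simp [hd]
      · simp [hc i j h, h]
  simp only [hrow, Finset.sum_add_distrib, Finset.sum_ite_eq, Finset.mem_univ, if_true,
    Finset.sum_const, Finset.card_univ, nsmul_eq_mul]
  ring

namespace ProbabilityTheory

variable {Ω : Type*} [MeasurableSpace Ω] {μ : Measure Ω} {X Y : Ω → ℝ}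

lemma covariance_sq_le_variance_mul_variance [IsFiniteMeasure μ] (hX : MemLp X 2 μ)
    (hY : MemLp Y 2 μ) : cov[X, Y; μ] ^ 2 ≤ Var[X; μ] * Var[Y; μ] := by
  have hquad : ∀ t : ℝ, 0 ≤ Var[Y; μ] * (t * t) + (-2 * cov[X, Y; μ]) * t + Var[X; μ] := by
    intro t
    have h := variance_nonneg (X - t • Y) μ
    rw [variance_sub hX (hY.const_smul t), covariance_smul_right, variance_smul] at h
    linarith
  have hdiscrim := discrim_le_zero hquad
  rw [discrim] at hdiscrim
  linarith

lemma corr_eq_covariance (hX : Var[X; μ] = 1) (hY : Var[Y; μ] = 1) :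
    corr μ X Y = cov[X, Y; μ] := by
  simp only [corr, hX, hY, mul_one, Real.sqrt_one, div_one]
  rfl

end ProbabilityTheory

theorem stmt13 {Ω : Type*} [MeasurableSpace Ω] (μ : Measure Ω) [IsProbabilityMeasure μ]
    (N : ℕ) (hN : 1 ≤ N) (T : Ω → ℝ) (L : Fin N → Ω → ℝ)
    (hTmem : MemLp T 2 μ) (hmem : ∀ i, MemLp (L i) 2 μ)
    (hTvar : variance T μ = 1) (hvar : ∀ i, variance (L i) μ = 1)
    (r c : ℝ)
    (hr : ∀ i, corr μ T (L i) = r)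
    (hc : ∀ i j, i ≠ j → corr μ (L i) (L j) = c) :
    r ^ 2 ≤ ((N - 1 : ℝ) * c + 1) / N := by
  have hNpos : (0 : ℝ) < N := by exact_mod_cast hN
  have hcov : cov[T, ∑ i, L i; μ] = N * r := by
    rw [covariance_sum_right hmem hTmem]
    simp [← corr_eq_covariance hTvar (hvar _), hr]
  have hvarSum : Var[∑ i, L i; μ] = N * ((N - 1) * c + 1) := by
    rw [variance_sum hmem, Fintype.sum_sum_eq_of_diag_of_offDiag _ 1 c, Fintype.card_fin]
    · intro i
      rw [covariance_self (hmem i).aemeasurable, hvar i]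
    · intro i j hij
      rw [← corr_eq_covariance (hvar i) (hvar j), hc i j hij]
  have hCS := covariance_sq_le_variance_mul_variance hTmem
    (memLp_finsetSum' Finset.univ fun i _ => hmem i)
  rw [hcov, hvarSum, hTvar, one_mul] at hCS
  rw [le_div_iff₀ hNpos]
  nlinarith
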